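/- arXiv:1106.4946 — 3 statements merged into one kernel-verified Lean document; each statement's English description precedes it below -/
import Mathlib

section
/- For all functions G₁, G₂ from pairs of finite subsets of ℝ^d to ℝ and every pair (γ⁺,γ⁻) of finite subsets of ℝ^d, the K-transform of the ⋆-convolution is the pointwise product of the K-transforms: (𝕂(G₁⋆G₂))(γ⁺,γ⁻) = (𝕂G₁)(γ⁺,γ⁻) · (𝕂G₂)(γ⁺,γ⁻). -/
open MeasureTheory Finset ENNReal

noncomputable section

/-- Finite configurations over `ℝ^d`. -/
abbrev Cfg (d : ℕ) := Finset (Fin d → ℝ)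

/-- Two-component `K`-transform. -/
def Ktr {d : ℕ} (G : Cfg d → Cfg d → ℝ) (γp γm : Cfg d) : ℝ :=
  ∑ ηp ∈ γp.powerset, ∑ ηm ∈ γm.powerset, G ηp ηm

/-- Two-component inverse `K`-transform. -/
def Kinv {d : ℕ} (F : Cfg d → Cfg d → ℝ) (ηp ηm : Cfg d) : ℝ :=
  ∑ ξp ∈ ηp.powerset, ∑ ξm ∈ ηm.powerset,
    (-1 : ℝ) ^ ((ηp \ ξp).card + (ηm \ ξm).card) * F ξp ξm

/-- The `⋆`-convolution. -/
def starConv {d : ℕ} (G₁ G₂ : Cfg d → Cfg d → ℝ) (ηp ηm : Cfg d) : ℝ :=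
  ∑ ξp ∈ ηp.powerset, ∑ ξm ∈ ηm.powerset, G₁ ξp ξm *
    ∑ ζp ∈ ξp.powerset, ∑ ζm ∈ ξm.powerset, G₂ ((ηp \ ξp) ∪ ζp) ((ηm \ ξm) ∪ ζm)

/-- The configuration `{x₁,…,xₙ}` associated with a tuple `(x₁,…,xₙ)`. -/
def toCfg {d n : ℕ} (x : Fin n → Fin d → ℝ) : Cfg d := Finset.image x Finset.univ

/-- Two-component Lebesgue–Poisson integral, real-valued version. -/
def lpInt2 {d : ℕ} (F : Cfg d → Cfg d → ℝ) : ℝ :=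
  ∑' (n : ℕ) (m : ℕ), (1 / ((Nat.factorial n : ℝ) * (Nat.factorial m : ℝ))) *
    ∫ x : Fin n → Fin d → ℝ, ∫ y : Fin m → Fin d → ℝ, F (toCfg x) (toCfg y)

/-- Two-component Lebesgue–Poisson integral, `ℝ≥0∞`-valued version. -/
def lpInt2nn {d : ℕ} (F : Cfg d → Cfg d → ℝ≥0∞) : ℝ≥0∞ :=
  ∑' (n : ℕ) (m : ℕ), ((Nat.factorial n * Nat.factorial m : ℕ) : ℝ≥0∞)⁻¹ *
    ∫⁻ x : Fin n → Fin d → ℝ, ∫⁻ y : Fin m → Fin d → ℝ, F (toCfg x) (toCfg y)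

/-- `L_C`-norm of a real-valued function on two-component finite configurations. -/
def normLC {d : ℕ} (C : ℝ) (F : Cfg d → Cfg d → ℝ) : ℝ≥0∞ :=
  lpInt2nn (fun ηp ηm => ENNReal.ofReal (|F ηp ηm| * C ^ (ηp.card + ηm.card)))

/-- `L_C`-norm of an `ℝ≥0∞`-valued function on two-component finite configurations. -/
def normLCnn {d : ℕ} (C : ℝ) (F : Cfg d → Cfg d → ℝ≥0∞) : ℝ≥0∞ :=
  lpInt2nn (fun ηp ηm => F ηp ηm * ENNReal.ofReal (C ^ (ηp.card + ηm.card)))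

/-- Inverse `K`-transform of a shifted one-point rate, e.g. `D±`, `B±`, `A±`. -/
def kerK {d : ℕ} (r : (Fin d → ℝ) → Cfg d → Cfg d → ℝ)
    (x : Fin d → ℝ) (ξp ξm ηp ηm : Cfg d) : ℝ :=
  ∑ ζp ∈ ηp.powerset, ∑ ζm ∈ ηm.powerset,
    (-1 : ℝ) ^ ((ηp \ ζp).card + (ηm \ ζm).card) * r x (ζp ∪ ξp) (ζm ∪ ξm)

/-- Inverse `K`-transform of a shifted two-point rate, e.g. `C₁±`, `C₂±`. -/
def kerK2 {d : ℕ} (c : (Fin d → ℝ) → (Fin d → ℝ) → Cfg d → Cfg d → ℝ)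
    (x y : Fin d → ℝ) (ξp ξm ηp ηm : Cfg d) : ℝ :=
  ∑ ζp ∈ ηp.powerset, ∑ ζm ∈ ηm.powerset,
    (-1 : ℝ) ^ ((ηp \ ζp).card + (ηm \ ζm).card) * c x y (ζp ∪ ξp) (ζm ∪ ξm)

/-- A function of pairs of finite configurations has bounded support. -/
def BddSupp {d : ℕ} (G : Cfg d → Cfg d → ℝ) : Prop :=
  ∃ (Λ : Set (Fin d → ℝ)) (N : ℕ), IsCompact Λ ∧
    ∀ ηp ηm : Cfg d,
      ¬((↑ηp : Set (Fin d → ℝ)) ⊆ Λ ∧ (↑ηm : Set (Fin d → ℝ)) ⊆ Λ ∧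
        ηp.card ≤ N ∧ ηm.card ≤ N) → G ηp ηm = 0

/-- A function of pairs of finite configurations is bounded. -/
def Bdd {d : ℕ} (G : Cfg d → Cfg d → ℝ) : Prop :=
  ∃ Cb : ℝ, ∀ ηp ηm : Cfg d, |G ηp ηm| ≤ Cb

/-- Two-component birth-and-death generator. -/
def LBD {d : ℕ} (dp dm bp bm : (Fin d → ℝ) → Cfg d → Cfg d → ℝ)
    (F : Cfg d → Cfg d → ℝ) (γp γm : Cfg d) : ℝ :=
  (∑ x ∈ γp, dp x (γp.erase x) γm * (F (γp.erase x) γm - F γp γm))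
  + (∫ x, bp x γp γm * (F (insert x γp) γm - F γp γm))
  + (∑ y ∈ γm, dm y γp (γm.erase y) * (F γp (γm.erase y) - F γp γm))
  + (∫ y, bm y γp γm * (F γp (insert y γm) - F γp γm))

/-- Hierarchical birth-and-death operator `L̂`. -/
def hatLBD {d : ℕ} (dp dm bp bm : (Fin d → ℝ) → Cfg d → Cfg d → ℝ)
    (G : Cfg d → Cfg d → ℝ) (ηp ηm : Cfg d) : ℝ :=
  -(∑ ξp ∈ ηp.powerset, ∑ ξm ∈ ηm.powerset, G ξp ξm *
      ((∑ x ∈ ξp, kerK dp x (ξp.erase x) ξm (ηp \ ξp) (ηm \ ξm))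
       + ∑ y ∈ ξm, kerK dm y ξp (ξm.erase y) (ηp \ ξp) (ηm \ ξm)))
  + ∑ ξp ∈ ηp.powerset, ∑ ξm ∈ ηm.powerset,
      ((∫ x, G (insert x ξp) ξm * kerK bp x ξp ξm (ηp \ ξp) (ηm \ ξm))
       + ∫ y, G ξp (insert y ξm) * kerK bm y ξp ξm (ηp \ ξp) (ηm \ ξm))

/-- Adjoint birth-and-death operator `L̂*`. -/
def hatLBDstar {d : ℕ} (dp dm bp bm : (Fin d → ℝ) → Cfg d → Cfg d → ℝ)
    (k : Cfg d → Cfg d → ℝ) (ηp ηm : Cfg d) : ℝ :=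
  -(∑ x ∈ ηp, lpInt2 (fun ξp ξm =>
      k (ηp ∪ ξp) (ηm ∪ ξm) * kerK dp x (ηp.erase x) ηm ξp ξm))
  + (∑ x ∈ ηp, lpInt2 (fun ξp ξm =>
      k ((ηp.erase x) ∪ ξp) (ηm ∪ ξm) * kerK bp x (ηp.erase x) ηm ξp ξm))
  - (∑ y ∈ ηm, lpInt2 (fun ξp ξm =>
      k (ηp ∪ ξp) (ηm ∪ ξm) * kerK dm y ηp (ηm.erase y) ξp ξm))
  + (∑ y ∈ ηm, lpInt2 (fun ξp ξm =>
      k (ηp ∪ ξp) ((ηm.erase y) ∪ ξm) * kerK bm y ηp (ηm.erase y) ξp ξm))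

/-- Mark-preserving hopping generator `L₁`. -/
def Lhop1 {d : ℕ} (c1p c1m : (Fin d → ℝ) → (Fin d → ℝ) → Cfg d → Cfg d → ℝ)
    (F : Cfg d → Cfg d → ℝ) (γp γm : Cfg d) : ℝ :=
  (∑ x ∈ γp, ∫ x', c1p x x' (γp.erase x) γm *
      (F (insert x' (γp.erase x)) γm - F γp γm))
  + (∑ y ∈ γm, ∫ y', c1m y y' γp (γm.erase y) *
      (F γp (insert y' (γm.erase y)) - F γp γm))

/-- Mark-flipping hopping generator `L₂`. -/
def Lhop2 {d : ℕ} (c2p c2m : (Fin d → ℝ) → (Fin d → ℝ) → Cfg d → Cfg d → ℝ)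
    (F : Cfg d → Cfg d → ℝ) (γp γm : Cfg d) : ℝ :=
  (∑ x ∈ γp, ∫ y, c2p x y (γp.erase x) γm *
      (F (γp.erase x) (insert y γm) - F γp γm))
  + (∑ y ∈ γm, ∫ x, c2m x y γp (γm.erase y) *
      (F (insert x γp) (γm.erase y) - F γp γm))

/-- Hierarchical mark-preserving hopping operator `L̂₁`. -/
def hatL1 {d : ℕ} (c1p c1m : (Fin d → ℝ) → (Fin d → ℝ) → Cfg d → Cfg d → ℝ)
    (G : Cfg d → Cfg d → ℝ) (ηp ηm : Cfg d) : ℝ :=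
  (∑ ξp ∈ ηp.powerset, ∑ ξm ∈ ηm.powerset, ∑ x ∈ ξp, ∫ x',
      (G (insert x' (ξp.erase x)) ξm - G ξp ξm) *
        kerK2 c1p x x' (ξp.erase x) ξm (ηp \ ξp) (ηm \ ξm))
  + (∑ ξp ∈ ηp.powerset, ∑ ξm ∈ ηm.powerset, ∑ y ∈ ξm, ∫ y',
      (G ξp (insert y' (ξm.erase y)) - G ξp ξm) *
        kerK2 c1m y y' ξp (ξm.erase y) (ηp \ ξp) (ηm \ ξm))

/-- Hierarchical mark-flipping hopping operator `L̂₂`. -/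
def hatL2 {d : ℕ} (c2p c2m : (Fin d → ℝ) → (Fin d → ℝ) → Cfg d → Cfg d → ℝ)
    (G : Cfg d → Cfg d → ℝ) (ηp ηm : Cfg d) : ℝ :=
  (∑ ξp ∈ ηp.powerset, ∑ ξm ∈ ηm.powerset, ∑ x ∈ ξp, ∫ y,
      (G (ξp.erase x) (insert y ξm) - G ξp ξm) *
        kerK2 c2p x y (ξp.erase x) ξm (ηp \ ξp) (ηm \ ξm))
  + (∑ ξp ∈ ηp.powerset, ∑ ξm ∈ ηm.powerset, ∑ y ∈ ξm, ∫ x,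
      (G (insert x ξp) (ξm.erase y) - G ξp ξm) *
        kerK2 c2m x y ξp (ξm.erase y) (ηp \ ξp) (ηm \ ξm))

/-- Adjoint mark-preserving hopping operator `L̂₁*`. -/
def hatL1star {d : ℕ} (c1p c1m : (Fin d → ℝ) → (Fin d → ℝ) → Cfg d → Cfg d → ℝ)
    (k : Cfg d → Cfg d → ℝ) (ηp ηm : Cfg d) : ℝ :=
  (∑ x ∈ ηp, lpInt2 (fun ξp ξm => ∫ x',
      k ((ξp ∪ ηp ∪ {x'}).erase x) (ξm ∪ ηm) * kerK2 c1p x' x (ηp.erase x) ηm ξp ξm))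
  - (∑ x ∈ ηp, lpInt2 (fun ξp ξm =>
      k (ξp ∪ ηp) (ξm ∪ ηm) * ∫ x', kerK2 c1p x x' (ηp.erase x) ηm ξp ξm))
  + (∑ y ∈ ηm, lpInt2 (fun ξp ξm => ∫ y',
      k (ξp ∪ ηp) ((ξm ∪ ηm ∪ {y'}).erase y) * kerK2 c1m y' y ηp (ηm.erase y) ξp ξm))
  - (∑ y ∈ ηm, lpInt2 (fun ξp ξm =>
      k (ξp ∪ ηp) (ξm ∪ ηm) * ∫ y', kerK2 c1m y y' ηp (ηm.erase y) ξp ξm))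

/-- Adjoint mark-flipping hopping operator `L̂₂*`. -/
def hatL2star {d : ℕ} (c2p c2m : (Fin d → ℝ) → (Fin d → ℝ) → Cfg d → Cfg d → ℝ)
    (k : Cfg d → Cfg d → ℝ) (ηp ηm : Cfg d) : ℝ :=
  (∑ y ∈ ηm, lpInt2 (fun ξp ξm => ∫ x,
      k (ξp ∪ ηp ∪ {x}) ((ξm ∪ ηm).erase y) * kerK2 c2p x y ηp (ηm.erase y) ξp ξm))
  - (∑ x ∈ ηp, lpInt2 (fun ξp ξm =>
      k (ξp ∪ ηp) (ξm ∪ ηm) * ∫ y, kerK2 c2p x y (ηp.erase x) ηm ξp ξm))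
  + (∑ x ∈ ηp, lpInt2 (fun ξp ξm => ∫ y,
      k ((ξp ∪ ηp).erase x) (ξm ∪ ηm ∪ {y}) * kerK2 c2m x y (ηp.erase x) ηm ξp ξm))
  - (∑ y ∈ ηm, lpInt2 (fun ξp ξm =>
      k (ξp ∪ ηp) (ξm ∪ ηm) * ∫ x, kerK2 c2m x y ηp (ηm.erase y) ξp ξm))

/-- Flipping generator `L₀`. -/
def Lflip {d : ℕ} (ap am : (Fin d → ℝ) → Cfg d → Cfg d → ℝ)
    (F : Cfg d → Cfg d → ℝ) (γp γm : Cfg d) : ℝ :=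
  (∑ x ∈ γp, ap x (γp.erase x) γm * (F (γp.erase x) (insert x γm) - F γp γm))
  + (∑ y ∈ γm, am y γp (γm.erase y) * (F (insert y γp) (γm.erase y) - F γp γm))

namespace Finset

variable {α M : Type*} [DecidableEq α] [AddCommMonoid M]

theorem union_sdiff_union_of_subset {η ξ ζ : Finset α} (hξη : ξ ⊆ η) (hζξ : ζ ⊆ ξ) :
    ξ ∪ ((η \ ξ) ∪ ζ) = η := by
  rw [← union_assoc, union_sdiff_of_subset hξη, union_eq_left.mpr (hζξ.trans hξη)]

theorem inter_sdiff_union_of_subset {η ξ ζ : Finset α} (hζξ : ζ ⊆ ξ) :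
    ξ ∩ ((η \ ξ) ∪ ζ) = ζ := by
  rw [inter_union_distrib_left, inter_sdiff_self, empty_union, inter_eq_right.mpr hζξ]

theorem union_sdiff_left_union_inter (s t : Finset α) : (s ∪ t) \ s ∪ s ∩ t = t := by
  rw [union_sdiff_left, inter_comm, sdiff_union_inter]

/-- The chains `ζ ⊆ ξ ⊆ η ⊆ γ` correspond to the pairs `s, t ⊆ γ` via
`(η, ξ, ζ) ↦ (ξ, (η \ ξ) ∪ ζ)`, with inverse `(s, t) ↦ (s ∪ t, s, s ∩ t)`. -/
theorem sum_powerset_chain_eq_sum_powerset_pair (γ : Finset α) (f : Finset α → Finset α → M) :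
    ∑ η ∈ γ.powerset, ∑ ξ ∈ η.powerset, ∑ ζ ∈ ξ.powerset, f ξ ((η \ ξ) ∪ ζ)
      = ∑ s ∈ γ.powerset, ∑ t ∈ γ.powerset, f s t := by
  simp only [sum_sigma']
  refine sum_nbij' (fun c => ⟨c.2.1, (c.1 \ c.2.1) ∪ c.2.2⟩)
    (fun p => ⟨p.1 ∪ p.2, p.1, p.1 ∩ p.2⟩) ?_ ?_ ?_ ?_ ?_
  · rintro ⟨η, ξ, ζ⟩ h
    simp only [mem_sigma, mem_powerset] at h ⊢
    obtain ⟨hηγ, hξη, hζξ⟩ := h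
    exact ⟨hξη.trans hηγ, union_subset (sdiff_subset.trans hηγ) (hζξ.trans (hξη.trans hηγ))⟩
  · rintro ⟨s, t⟩ h
    simp only [mem_sigma, mem_powerset] at h ⊢
    exact ⟨union_subset h.1 h.2, subset_union_left, inter_subset_left⟩
  · rintro ⟨η, ξ, ζ⟩ h
    simp only [mem_sigma, mem_powerset] at h
    obtain ⟨-, hξη, hζξ⟩ := h
    rw [union_sdiff_union_of_subset hξη hζξ, inter_sdiff_union_of_subset hζξ]
  · rintro ⟨s, t⟩ -
    rw [union_sdiff_left_union_inter]
  · exact fun _ _ => rfl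

theorem sum_powerset_chain_eq_sum_powerset_pair₂ (γ γ' : Finset α)
    (f : Finset α → Finset α → Finset α → Finset α → M) :
    ∑ η ∈ γ.powerset, ∑ η' ∈ γ'.powerset, ∑ ξ ∈ η.powerset, ∑ ξ' ∈ η'.powerset,
      ∑ ζ ∈ ξ.powerset, ∑ ζ' ∈ ξ'.powerset, f ξ ξ' ((η \ ξ) ∪ ζ) ((η' \ ξ') ∪ ζ')
      = ∑ s ∈ γ.powerset, ∑ s' ∈ γ'.powerset, ∑ t ∈ γ.powerset, ∑ t' ∈ γ'.powerset,
          f s s' t t' := by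
  have reorder : ∀ η ∈ γ.powerset,
      ∑ η' ∈ γ'.powerset, ∑ ξ ∈ η.powerset, ∑ ξ' ∈ η'.powerset,
        ∑ ζ ∈ ξ.powerset, ∑ ζ' ∈ ξ'.powerset, f ξ ξ' ((η \ ξ) ∪ ζ) ((η' \ ξ') ∪ ζ')
      = ∑ ξ ∈ η.powerset, ∑ ζ ∈ ξ.powerset, ∑ η' ∈ γ'.powerset, ∑ ξ' ∈ η'.powerset,
          ∑ ζ' ∈ ξ'.powerset, f ξ ξ' ((η \ ξ) ∪ ζ) ((η' \ ξ') ∪ ζ') := fun η _ => by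
    rw [sum_comm]
    refine sum_congr rfl fun ξ _ => ?_
    rw [← sum_comm]
    exact sum_congr rfl fun η' _ => sum_comm
  rw [sum_congr rfl reorder, sum_powerset_chain_eq_sum_powerset_pair γ fun ξ t =>
    ∑ η' ∈ γ'.powerset, ∑ ξ' ∈ η'.powerset, ∑ ζ' ∈ ξ'.powerset, f ξ ξ' t ((η' \ ξ') ∪ ζ')]
  refine sum_congr rfl fun s _ => ?_
  rw [sum_comm (s := γ'.powerset)]
  exact sum_congr rfl fun t _ => sum_powerset_chain_eq_sum_powerset_pair γ' (f s · t ·)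

end Finset

/-- the `𝕂`-transform maps the `⋆`-convolution to the pointwise product. -/
theorem Ktr_starConv {d : ℕ} (G₁ G₂ : Cfg d → Cfg d → ℝ) (γp γm : Cfg d) :
    Ktr (starConv G₁ G₂) γp γm = Ktr G₁ γp γm * Ktr G₂ γp γm := by
  -- `sum_mul` before `mul_sum`, so that the right side is summed in the order `αp αm βp βm`
  simp only [Ktr, starConv, sum_mul]
  simp only [mul_sum]
  exact sum_powerset_chain_eq_sum_powerset_pair₂ γp γm fun αp αm βp βm => G₁ αp αm * G₂ βp βm
end
end

section
/- (Minlos-type integration lemma for the two-component Lebesgue–Poisson measure.) Let H be a map assigning to two pairs of finite subsets of ℝ^d a value in [0,∞], such that for all n, m, k, l ∈ ℕ the induced maps on tuples ((x_i), (y_j), (u_p), (v_q)) ↦ H({x₁,…,x_n}, {y₁,…,y_m}, {u₁,…,u_k}, {v₁,…,v_l}) are Borel measurable. Then, with values in [0,∞], ∑_{n,m≥0} (1/(n!·m!)) ∫_{(ℝ^d)^n}∫_{(ℝ^d)^m} ∑_{S⊆{1,…,n}} ∑_{T⊆{1,…,m}} H({x₁,…,x_n}, {y₁,…,y_m}, {x_i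 : i∈S}, {y_j : j∈T}) dy dx = ∑_{n,m,k,l≥0} (1/(n!·m!·k!·l!)) ∫_{(ℝ^d)^n}∫_{(ℝ^d)^m}∫_{(ℝ^d)^k}∫_{(ℝ^d)^l} H({x₁,…,x_n}∪{u₁,…,u_k}, {y₁,…,y_m}∪{v₁,…,v_l}, {u₁,…,u_k}, {v₁,…,v_l}) dv du dy dx, all integrals being with respect to Lebesgue measure. -/
open MeasureTheory Finset ENNReal

noncomputable section

/-!
Split a tuple `x ∈ (ℝ^d)^n` along `S ⊆ {1,…,n}` into its coordinates outside and inside `S`,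
tuples of lengths `n - |S|` and `|S|`. Lebesgue measure on `(ℝ^d)^n` is the product of the
measures on the two blocks, so the `(S, T)`-term of the left-hand side is a four-fold integral
depending only on `(n - |S|, m - |T|, |S|, |T|)`. There are `C(n, j)` subsets of size `j` and
`C(n, j) / n! = 1 / ((n - j)! j!)`, so summing over `n` and `j ≤ n` is summing independently over
`n - j` and `j`.
-/

open scoped Nat

lemma ENNReal.tsum_sum_range_sub (g : ℕ → ℕ → ℝ≥0∞) :
    ∑' n, ∑ j ∈ range (n + 1), g (n - j) j = ∑' (a) (k), g a k := by
  calc ∑' n, ∑ j ∈ range (n + 1), g (n - j) j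
      = ∑' n, ∑ p ∈ antidiagonal n, g p.2 p.1 := by
        simp_rw [Nat.sum_antidiagonal_eq_sum_range_succ fun k a => g a k]
    _ = ∑' p : ℕ × ℕ, g p.2 p.1 := by
        rw [← HasAntidiagonal.sigmaAntidiagonalEquivProd.tsum_eq, ENNReal.tsum_sigma']
        exact tsum_congr fun n => (Finset.tsum_subtype (antidiagonal n) fun p => g p.2 p.1).symm
    _ = ∑' (a) (k), g a k := by rw [ENNReal.tsum_prod', ENNReal.tsum_comm]

lemma ENNReal.inv_natCast_mul (a b : ℕ) :
    ((a * b : ℕ) : ℝ≥0∞)⁻¹ = (a : ℝ≥0∞)⁻¹ * (b : ℝ≥0∞)⁻¹ := by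
  rw [Nat.cast_mul, ENNReal.mul_inv (.inr (natCast_ne_top b)) (.inl (natCast_ne_top a))]

lemma ENNReal.inv_factorial_mul_choose {n j : ℕ} (h : j ≤ n) :
    (n ! : ℝ≥0∞)⁻¹ * n.choose j = ((n - j)! : ℝ≥0∞)⁻¹ * (j ! : ℝ≥0∞)⁻¹ := by
  have key : (n ! : ℝ≥0∞) = n.choose j * ((n - j)! * j !) := by
    rw [← Nat.choose_mul_factorial_mul_factorial h]; push_cast; ring
  rw [key, ENNReal.mul_inv (.inl (by simp [(Nat.choose_pos h).ne'])) (by simp), mul_right_comm,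
    ENNReal.inv_mul_cancel (by simp [Nat.choose_pos h |>.ne']) (by simp), one_mul,
    ENNReal.mul_inv (by simp) (by simp)]

lemma ENNReal.tsum_inv_factorial_mul_sum_powerset (c : ℕ → ℕ → ℝ≥0∞) :
    ∑' n, (n ! : ℝ≥0∞)⁻¹ * ∑ S ∈ (univ : Finset (Fin n)).powerset, c (n - #S) #S =
      ∑' (a) (k), (a ! : ℝ≥0∞)⁻¹ * (k ! : ℝ≥0∞)⁻¹ * c a k := by
  rw [← ENNReal.tsum_sum_range_sub]
  refine tsum_congr fun n => ?_
  rw [sum_powerset_apply_card (fun j => c (n - j) j), card_univ, Fintype.card_fin, mul_sum]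
  refine sum_congr rfl fun j hj => ?_
  rw [nsmul_eq_mul, ← mul_assoc, ENNReal.inv_factorial_mul_choose (by grind)]

lemma ENNReal.tsum_tsum_inv_factorial_mul_sum_powerset (c : ℕ → ℕ → ℕ → ℕ → ℝ≥0∞) :
    ∑' (n) (m), ((n ! * m ! : ℕ) : ℝ≥0∞)⁻¹ *
      ∑ S ∈ (univ : Finset (Fin n)).powerset, ∑ T ∈ (univ : Finset (Fin m)).powerset,
        c (n - #S) (m - #T) #S #T =
    ∑' (n) (m) (k) (l), ((n ! * m ! * k ! * l ! : ℕ) : ℝ≥0∞)⁻¹ * c n m k l := by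
  calc _ = ∑' n, (n ! : ℝ≥0∞)⁻¹ * ∑ S ∈ (univ : Finset (Fin n)).powerset,
          ∑' m, (m ! : ℝ≥0∞)⁻¹ * ∑ T ∈ (univ : Finset (Fin m)).powerset,
            c (n - #S) (m - #T) #S #T := by
        refine tsum_congr fun n => ?_
        rw [← Summable.tsum_finsetSum fun _ _ => ENNReal.summable, ← ENNReal.tsum_mul_left]
        refine tsum_congr fun m => ?_
        rw [ENNReal.inv_natCast_mul, mul_assoc, mul_sum, mul_sum]
    _ = ∑' n, (n ! : ℝ≥0∞)⁻¹ * ∑ S ∈ (univ : Finset (Fin n)).powerset,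
          ∑' (b) (l), (b ! : ℝ≥0∞)⁻¹ * (l ! : ℝ≥0∞)⁻¹ * c (n - #S) b #S l := by
        refine tsum_congr fun n => congrArg _ (sum_congr rfl fun S _ => ?_)
        exact tsum_inv_factorial_mul_sum_powerset fun b l => c (n - #S) b #S l
    _ = ∑' (a) (k), (a ! : ℝ≥0∞)⁻¹ * (k ! : ℝ≥0∞)⁻¹ *
          ∑' (b) (l), (b ! : ℝ≥0∞)⁻¹ * (l ! : ℝ≥0∞)⁻¹ * c a b k l :=
        tsum_inv_factorial_mul_sum_powerset fun a k =>
          ∑' (b) (l), (b ! : ℝ≥0∞)⁻¹ * (l ! : ℝ≥0∞)⁻¹ * c a b k l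
    _ = _ := by
        simp_rw [← ENNReal.tsum_mul_left]
        refine tsum_congr fun a => ?_
        rw [ENNReal.tsum_comm]
        refine tsum_congr fun b => tsum_congr fun k => tsum_congr fun l => ?_
        simp only [ENNReal.inv_natCast_mul]
        ring

section MergeEquiv

variable {ι κ ι' E : Type*}

def mergeEquiv [MeasurableSpace E] (e : ι ⊕ κ ≃ ι') : (ι → E) × (κ → E) ≃ᵐ (ι' → E) :=
  (MeasurableEquiv.sumPiEquivProdPi fun _ => E).symm.trans
    (MeasurableEquiv.piCongrLeft (fun _ => E) e)

@[simp]
lemma mergeEquiv_apply_equiv [MeasurableSpace E] (e : ι ⊕ κ ≃ ι') (p : (ι → E) × (κ → E))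
    (a : ι ⊕ κ) : mergeEquiv e p (e a) = Sum.elim p.1 p.2 a := by
  simp only [mergeEquiv, MeasurableEquiv.trans_apply, MeasurableEquiv.coe_piCongrLeft,
    Equiv.piCongrLeft_apply_apply, MeasurableEquiv.coe_sumPiEquivProdPi_symm]
  rcases a with a | a <;> rfl

lemma range_mergeEquiv [MeasurableSpace E] (e : ι ⊕ κ ≃ ι') (p : (ι → E) × (κ → E)) :
    Set.range (mergeEquiv e p) = Set.range p.1 ∪ Set.range p.2 := by
  rw [← e.surjective.range_comp, ← Set.Sum.elim_range]
  congr 1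
  funext a
  simp

lemma measurePreserving_mergeEquiv [Fintype ι] [Fintype κ] [Fintype ι'] [MeasureSpace E]
    [SigmaFinite (volume : Measure E)] (e : ι ⊕ κ ≃ ι') :
    MeasurePreserving (mergeEquiv (E := E) e) volume volume :=
  (volume_measurePreserving_piCongrLeft (fun _ => E) e).comp
    (volume_measurePreserving_sumPiEquivProdPi_symm fun _ => E)

lemma lintegral_eq_lintegral_mergeEquiv [Fintype ι] [Fintype κ] [Fintype ι'] [MeasureSpace E]
    [SigmaFinite (volume : Measure E)] (e : ι ⊕ κ ≃ ι') {g : (ι' → E) → ℝ≥0∞} (hg : Measurable g) :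
    ∫⁻ y, g y = ∫⁻ x, ∫⁻ u, g (mergeEquiv e (x, u)) := by
  rw [← (measurePreserving_mergeEquiv e).lintegral_comp_emb
    (mergeEquiv e).measurableEmbedding, Measure.volume_eq_prod]
  exact lintegral_prod (fun p => g (mergeEquiv e p))
    (hg.comp (mergeEquiv e).measurable).aemeasurable

end MergeEquiv

def Finset.complSumEquiv {n : ℕ} (S : Finset (Fin n)) : Fin (n - #S) ⊕ Fin #S ≃ Fin n :=
  (Equiv.sumComm _ _).trans <|
    (Equiv.sumCongr (Fintype.equivFinOfCardEq (by simp)).symm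
      (Fintype.equivFinOfCardEq (by simp [Fintype.card_subtype_compl])).symm).trans
    (Equiv.sumCompl (· ∈ S))

lemma Finset.range_complSumEquiv_inr {n : ℕ} (S : Finset (Fin n)) :
    Set.range (fun j => S.complSumEquiv (.inr j)) = S := by
  simp only [Finset.complSumEquiv, Equiv.trans_apply, Equiv.sumComm_apply, Sum.swap_inr,
    Equiv.sumCongr_apply, Sum.map_inl, Equiv.sumCompl_apply_inl]
  exact (Set.range_comp Subtype.val _).trans (by simp)

section Configurations

variable {d : ℕ}

lemma coe_toCfg {n : ℕ} (x : Fin n → Fin d → ℝ) :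
    (toCfg x : Set (Fin d → ℝ)) = Set.range x := by
  simp [toCfg]

lemma toCfg_mergeEquiv {k l n : ℕ} (e : Fin k ⊕ Fin l ≃ Fin n) (x : Fin k → Fin d → ℝ)
    (u : Fin l → Fin d → ℝ) : toCfg (mergeEquiv e (x, u)) = toCfg x ∪ toCfg u :=
  Finset.coe_injective <| by push_cast [coe_toCfg, range_mergeEquiv]; rfl

lemma image_eq_toCfg {n : ℕ} (S : Finset (Fin n)) (y : Fin n → Fin d → ℝ) :
    S.image y = toCfg fun j => y (S.complSumEquiv (.inr j)) :=
  Finset.coe_injective <| by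
    rw [coe_image, coe_toCfg, Set.range_comp' y, S.range_complSumEquiv_inr]

lemma image_mergeEquiv_complSumEquiv {n : ℕ} (S : Finset (Fin n))
    (x : Fin (n - #S) → Fin d → ℝ) (u : Fin #S → Fin d → ℝ) :
    S.image (mergeEquiv S.complSumEquiv (x, u)) = toCfg u := by
  rw [image_eq_toCfg]
  simp only [mergeEquiv_apply_equiv, Sum.elim_inr]

lemma lintegral_toCfg_image {n : ℕ} (S : Finset (Fin n)) {g : Cfg d → Cfg d → ℝ≥0∞}
    (hg : Measurable fun y : Fin n → Fin d → ℝ => g (toCfg y) (S.image y)) :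
    ∫⁻ y, g (toCfg y) (S.image y) =
      ∫⁻ (x : Fin (n - #S) → Fin d → ℝ) (u : Fin #S → Fin d → ℝ),
        g (toCfg x ∪ toCfg u) (toCfg u) := by
  simp only [lintegral_eq_lintegral_mergeEquiv S.complSumEquiv hg, toCfg_mergeEquiv,
    image_mergeEquiv_complSumEquiv]

def MeasurableOnTuples (H : Cfg d → Cfg d → Cfg d → Cfg d → ℝ≥0∞) : Prop :=
  ∀ n m k l : ℕ, Measurable (fun p :
    (Fin n → Fin d → ℝ) × (Fin m → Fin d → ℝ) × (Fin k → Fin d → ℝ) × (Fin l → Fin d → ℝ) =>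
      H (toCfg p.1) (toCfg p.2.1) (toCfg p.2.2.1) (toCfg p.2.2.2))

/-- `Cfg d` carries no σ-algebra; these are the configuration-valued maps through which
`MeasurableOnTuples` can be composed. -/
def CfgMeasurable {α : Type*} [MeasurableSpace α] (c : α → Cfg d) : Prop :=
  ∃ n, ∃ f : α → Fin n → Fin d → ℝ, Measurable f ∧ c = fun a => toCfg (f a)

section CfgMeasurable

variable {α : Type*} [MeasurableSpace α]

lemma Measurable.cfgMeasurable_toCfg {n : ℕ} {f : α → Fin n → Fin d → ℝ} (hf : Measurable f) :
    CfgMeasurable fun a => toCfg (f a) :=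
  ⟨n, f, hf, rfl⟩

lemma Measurable.cfgMeasurable_image {n : ℕ} {f : α → Fin n → Fin d → ℝ} (hf : Measurable f)
    (S : Finset (Fin n)) : CfgMeasurable fun a => S.image (f a) :=
  ⟨#S, fun a j => f a (S.complSumEquiv (.inr j)), by fun_prop,
    funext fun a => image_eq_toCfg S (f a)⟩

lemma CfgMeasurable.union {c₁ c₂ : α → Cfg d} (h₁ : CfgMeasurable c₁) (h₂ : CfgMeasurable c₂) :
    CfgMeasurable fun a => c₁ a ∪ c₂ a := by
  obtain ⟨k, f₁, hf₁, rfl⟩ := h₁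
  obtain ⟨l, f₂, hf₂, rfl⟩ := h₂
  exact ⟨k + l, fun a => mergeEquiv finSumFinEquiv (f₁ a, f₂ a),
    (mergeEquiv _).measurable.comp (hf₁.prodMk hf₂),
    funext fun a => (toCfg_mergeEquiv _ _ _).symm⟩

lemma MeasurableOnTuples.comp {H : Cfg d → Cfg d → Cfg d → Cfg d → ℝ≥0∞}
    (hH : MeasurableOnTuples H) {c₁ c₂ c₃ c₄ : α → Cfg d} (h₁ : CfgMeasurable c₁)
    (h₂ : CfgMeasurable c₂) (h₃ : CfgMeasurable c₃) (h₄ : CfgMeasurable c₄) :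
    Measurable fun a => H (c₁ a) (c₂ a) (c₃ a) (c₄ a) := by
  obtain ⟨_, f₁, hf₁, rfl⟩ := h₁
  obtain ⟨_, f₂, hf₂, rfl⟩ := h₂
  obtain ⟨_, f₃, hf₃, rfl⟩ := h₃
  obtain ⟨_, f₄, hf₄, rfl⟩ := h₄
  exact (hH _ _ _ _).comp (hf₁.prodMk (hf₂.prodMk (hf₃.prodMk hf₄)))

end CfgMeasurable

def unionIntegral (H : Cfg d → Cfg d → Cfg d → Cfg d → ℝ≥0∞) (n m k l : ℕ) : ℝ≥0∞ :=
  ∫⁻ (x : Fin n → Fin d → ℝ) (y : Fin m → Fin d → ℝ) (u : Fin k → Fin d → ℝ)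
    (v : Fin l → Fin d → ℝ), H (toCfg x ∪ toCfg u) (toCfg y ∪ toCfg v) (toCfg u) (toCfg v)

lemma lintegral_lintegral_image_eq_unionIntegral {H : Cfg d → Cfg d → Cfg d → Cfg d → ℝ≥0∞}
    (hH : MeasurableOnTuples H) {n m : ℕ} (S : Finset (Fin n)) (T : Finset (Fin m)) :
    ∫⁻ (x : Fin n → Fin d → ℝ) (y : Fin m → Fin d → ℝ),
      H (toCfg x) (toCfg y) (S.image x) (T.image y) = unionIntegral H (n - #S) (m - #T) #S #T := by
  calc _ = ∫⁻ (x : Fin n → Fin d → ℝ) (y : Fin (m - #T) → Fin d → ℝ) (v : Fin #T → Fin d → ℝ),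
        H (toCfg x) (toCfg y ∪ toCfg v) (S.image x) (toCfg v) :=
        lintegral_congr fun x => lintegral_toCfg_image T
          (g := fun β η => H (toCfg x) β (S.image x) η)
          (hH.comp measurable_const.cfgMeasurable_toCfg measurable_id.cfgMeasurable_toCfg
            (measurable_const.cfgMeasurable_image S) (measurable_id.cfgMeasurable_image T))
    _ = ∫⁻ (x : Fin (n - #S) → Fin d → ℝ) (u : Fin #S → Fin d → ℝ)
          (y : Fin (m - #T) → Fin d → ℝ) (v : Fin #T → Fin d → ℝ),
        H (toCfg x ∪ toCfg u) (toCfg y ∪ toCfg v) (toCfg u) (toCfg v) :=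
        lintegral_toCfg_image S
          (g := fun α ξ => ∫⁻ (y : Fin (m - #T) → Fin d → ℝ) (v : Fin #T → Fin d → ℝ),
            H α (toCfg y ∪ toCfg v) ξ (toCfg v))
          ((hH.comp measurable_fst.fst.cfgMeasurable_toCfg
            (measurable_fst.snd.cfgMeasurable_toCfg.union measurable_snd.cfgMeasurable_toCfg)
            (measurable_fst.fst.cfgMeasurable_image S)
            measurable_snd.cfgMeasurable_toCfg).lintegral_prod_right'.lintegral_prod_right')
    _ = unionIntegral H (n - #S) (m - #T) #S #T :=
        lintegral_congr fun x => lintegral_lintegral_swap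
          (hH.comp (measurable_const.cfgMeasurable_toCfg.union
              measurable_fst.fst.cfgMeasurable_toCfg)
            (measurable_fst.snd.cfgMeasurable_toCfg.union measurable_snd.cfgMeasurable_toCfg)
            measurable_fst.fst.cfgMeasurable_toCfg
            measurable_snd.cfgMeasurable_toCfg).lintegral_prod_right'.aemeasurable

lemma lintegral_lintegral_finsetSum {ι α β : Type*} [MeasurableSpace α] [MeasurableSpace β]
    {μ : Measure α} {ν : Measure β} [SFinite ν] (s : Finset ι) {f : ι → α → β → ℝ≥0∞}
    (hf : ∀ i ∈ s, Measurable (Function.uncurry (f i))) :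
    ∫⁻ x, ∫⁻ y, ∑ i ∈ s, f i x y ∂ν ∂μ = ∑ i ∈ s, ∫⁻ x, ∫⁻ y, f i x y ∂ν ∂μ := by
  rw [← lintegral_finsetSum s (f := fun i x => ∫⁻ y, f i x y ∂ν) fun i hi =>
    (hf i hi).lintegral_prod_right']
  exact lintegral_congr fun x =>
    lintegral_finsetSum s fun i hi => (hf i hi).comp measurable_prodMk_left

lemma lintegral_lintegral_sum_powerset {H : Cfg d → Cfg d → Cfg d → Cfg d → ℝ≥0∞}
    (hH : MeasurableOnTuples H) (n m : ℕ) :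
    ∫⁻ (x : Fin n → Fin d → ℝ) (y : Fin m → Fin d → ℝ),
      ∑ S ∈ (univ : Finset (Fin n)).powerset, ∑ T ∈ (univ : Finset (Fin m)).powerset,
        H (toCfg x) (toCfg y) (S.image x) (T.image y) =
    ∑ S ∈ (univ : Finset (Fin n)).powerset, ∑ T ∈ (univ : Finset (Fin m)).powerset,
      unionIntegral H (n - #S) (m - #T) #S #T := by
  have hmeas (S : Finset (Fin n)) (T : Finset (Fin m)) :
      Measurable fun p : (Fin n → Fin d → ℝ) × (Fin m → Fin d → ℝ) =>
        H (toCfg p.1) (toCfg p.2) (S.image p.1) (T.image p.2) :=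
    hH.comp measurable_fst.cfgMeasurable_toCfg measurable_snd.cfgMeasurable_toCfg
      (measurable_fst.cfgMeasurable_image S) (measurable_snd.cfgMeasurable_image T)
  rw [lintegral_lintegral_finsetSum _ fun S _ => Finset.measurable_sum _ fun T _ => hmeas S T]
  refine Finset.sum_congr rfl fun S _ => ?_
  rw [lintegral_lintegral_finsetSum _ fun T _ => hmeas S T]
  exact Finset.sum_congr rfl fun T _ => lintegral_lintegral_image_eq_unionIntegral hH S T

end Configurations

/-- Minlos-type integration lemma for the two-component
Lebesgue–Poisson measure. -/
theorem minlos_two_component {d : ℕ}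
    (H : Cfg d → Cfg d → Cfg d → Cfg d → ℝ≥0∞)
    (hH : ∀ n m k l : ℕ, Measurable (fun p :
        (Fin n → Fin d → ℝ) × (Fin m → Fin d → ℝ) ×
          (Fin k → Fin d → ℝ) × (Fin l → Fin d → ℝ) =>
        H (toCfg p.1) (toCfg p.2.1) (toCfg p.2.2.1) (toCfg p.2.2.2))) :
    (∑' (n : ℕ) (m : ℕ), ((Nat.factorial n * Nat.factorial m : ℕ) : ℝ≥0∞)⁻¹ *
      ∫⁻ x : Fin n → Fin d → ℝ, ∫⁻ y : Fin m → Fin d → ℝ,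
        ∑ S ∈ (Finset.univ : Finset (Fin n)).powerset,
          ∑ T ∈ (Finset.univ : Finset (Fin m)).powerset,
            H (toCfg x) (toCfg y) (S.image x) (T.image y))
    = ∑' (n : ℕ) (m : ℕ) (k : ℕ) (l : ℕ),
        ((Nat.factorial n * Nat.factorial m * Nat.factorial k * Nat.factorial l : ℕ) : ℝ≥0∞)⁻¹ *
        ∫⁻ x : Fin n → Fin d → ℝ, ∫⁻ y : Fin m → Fin d → ℝ,
        ∫⁻ u : Fin k → Fin d → ℝ, ∫⁻ v : Fin l → Fin d → ℝ,
          H (toCfg x ∪ toCfg u) (toCfg y ∪ toCfg v) (toCfg u) (toCfg v) := by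
  simp only [lintegral_lintegral_sum_powerset hH]
  exact ENNReal.tsum_tsum_inv_factorial_mul_sum_powerset (unionIntegral H)
end
end

section
/- (Explicit form of the hierarchical operator for flipping dynamics.) For arbitrary rate functions a⁺, a⁻ mapping (x, η⁺, η⁻), x ∈ ℝ^d, (η⁺,η⁻) a pair of finite subsets of ℝ^d, to ℝ, for every function G of pairs of finite subsets of ℝ^d and every pair (η⁺,η⁻) of disjoint finite subsets: (𝕂⁻¹(L₀(𝕂G)))(η⁺,η⁻) = ∑_{ξ⁺⊆η⁺}∑_{ξ⁻⊆η⁻} ∑_{x∈ξ⁺} (G(ξ⁺∖{x}, ξ⁻∪{x}) − G(ξ⁺,ξ⁻)) · A⁺(x, ξ⁺∖{x}, ξ⁻, η⁺∖ξ⁺, η⁻∖ξ⁻) + ∑_{ξ⁺⊆η⁺}∑_{ξ⁻⊆η⁻} ∑_{y∈ξ⁻} (G(ξ⁺∪{y}, ξ⁻∖{y}) − G(ξ⁺,ξ⁻)) · A⁻(y, ξ⁺, ξ⁻∖{y}, η⁺∖ξ⁺, η⁻∖ξ⁻). -/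
open MeasureTheory Finset ENNReal

noncomputable section

/-! On a pair of disjoint configurations `σ`, `L₀ 𝕂 G` is a binomial convolution: writing
`σ = ξ ⊔ ζ`, the flip of `x ∈ ξ⁺` contributes `(G(ξ⁺∖x, ξ⁻∪x) − G(ξ)) · a⁺(x, ζ⁺ ∪ ξ⁺∖x, ζ⁻ ∪ ξ⁻)`.
Applying `𝕂⁻¹` to a binomial convolution `∑_{ξ ⊆ σ} F(ξ, σ∖ξ)` applies it to the second argument
of `F` only, and that turns the rate `a⁺` into `A⁺ = kerK a⁺`. Disjointness is what lets the
flipped point `x` be added to `ξ⁻ ⊆ σ⁻` as a new point. -/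

section Powerset

variable {α M : Type*} [DecidableEq α] [AddCommMonoid M]

theorem sum_powerset_sum_powerset_sdiff (s : Finset α) (f : Finset α → Finset α → M) :
    ∑ t ∈ s.powerset, ∑ u ∈ t.powerset, f u (t \ u) =
      ∑ u ∈ s.powerset, ∑ v ∈ (s \ u).powerset, f u v := by
  rw [sum_sigma', sum_sigma']
  refine sum_bij' (fun p _ => ⟨p.2, p.1 \ p.2⟩) (fun p _ => ⟨p.1 ∪ p.2, p.1⟩) ?_ ?_ ?_ ?_ ?_
  all_goals
    rintro ⟨t, u⟩ h
    simp only [mem_sigma, mem_powerset] at h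
  · simp only [mem_sigma, mem_powerset]; grind
  · simp only [mem_sigma, mem_powerset]; grind
  · simp [union_sdiff_of_subset h.2]
  · simp [union_sdiff_cancel_left (disjoint_sdiff.mono_right h.2)]
  · simp

theorem sum_powerset_sum_powerset_sdiff₂ (sp sm : Finset α)
    (f : Finset α → Finset α → Finset α → Finset α → M) :
    ∑ tp ∈ sp.powerset, ∑ tm ∈ sm.powerset, ∑ up ∈ tp.powerset, ∑ um ∈ tm.powerset,
        f up um (tp \ up) (tm \ um) =
      ∑ up ∈ sp.powerset, ∑ um ∈ sm.powerset, ∑ vp ∈ (sp \ up).powerset,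
        ∑ vm ∈ (sm \ um).powerset, f up um vp vm := by
  calc _ = ∑ tp ∈ sp.powerset, ∑ up ∈ tp.powerset, ∑ um ∈ sm.powerset,
        ∑ vm ∈ (sm \ um).powerset, f up um (tp \ up) vm := by
        refine sum_congr rfl fun tp _ => ?_
        rw [sum_comm]
        exact sum_congr rfl fun up _ => sum_powerset_sum_powerset_sdiff sm _
    _ = _ := by
        rw [sum_powerset_sum_powerset_sdiff sp
          (fun up vp => ∑ um ∈ sm.powerset, ∑ vm ∈ (sm \ um).powerset, f up um vp vm)]
        exact sum_congr rfl fun up _ => sum_comm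

theorem sum_powerset_sum_mem (s : Finset α) (f : α → Finset α → M) :
    ∑ t ∈ s.powerset, ∑ x ∈ t, f x t = ∑ x ∈ s, ∑ t ∈ (s.erase x).powerset, f x (insert x t) := by
  rw [sum_sigma', sum_sigma']
  refine sum_bij' (fun p _ => ⟨p.2, p.1.erase p.2⟩) (fun p _ => ⟨insert p.1 p.2, p.1⟩)
    ?_ ?_ ?_ ?_ ?_
  all_goals
    rintro ⟨t, u⟩ h
    simp only [mem_sigma, mem_powerset] at h
  · simp only [mem_sigma, mem_powerset]; grind
  · simp only [mem_sigma, mem_powerset]; grind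
  · simp [insert_erase h.2]
  · simp [erase_insert fun hu => (mem_erase.mp (h.2 hu)).1 rfl]
  · simp [insert_erase h.2]

end Powerset

section KTransform

variable {d : ℕ}

theorem Ktr_swap (G : Cfg d → Cfg d → ℝ) (γp γm : Cfg d) :
    Ktr (fun ηm ηp => G ηp ηm) γm γp = Ktr G γp γm :=
  sum_comm

theorem Ktr_erase_insert_sub (G : Cfg d → Cfg d → ℝ) {σp σm : Cfg d} {x : Fin d → ℝ}
    (hxp : x ∈ σp) (hxm : x ∉ σm) :
    Ktr G (σp.erase x) (insert x σm) - Ktr G σp σm =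
      ∑ ξp ∈ (σp.erase x).powerset, ∑ ξm ∈ σm.powerset,
        (G ξp (insert x ξm) - G (insert x ξp) ξm) := by
  obtain ⟨τ, hxτ, rfl⟩ : ∃ τ, x ∉ τ ∧ σp = insert x τ :=
    ⟨σp.erase x, notMem_erase x σp, (insert_erase hxp).symm⟩
  simp only [Ktr, erase_insert hxτ, sum_powerset_insert hxτ, sum_powerset_insert hxm,
    sum_add_distrib, sum_sub_distrib]
  abel

theorem Kinv_congr {F F' : Cfg d → Cfg d → ℝ} {ηp ηm : Cfg d}
    (h : ∀ ξp ⊆ ηp, ∀ ξm ⊆ ηm, F ξp ξm = F' ξp ξm) : Kinv F ηp ηm = Kinv F' ηp ηm :=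
  sum_congr rfl fun ξp hξp => sum_congr rfl fun ξm hξm => by
    rw [h ξp (mem_powerset.mp hξp) ξm (mem_powerset.mp hξm)]

theorem Kinv_add (F F' : Cfg d → Cfg d → ℝ) (ηp ηm : Cfg d) :
    Kinv (fun ξp ξm => F ξp ξm + F' ξp ξm) ηp ηm = Kinv F ηp ηm + Kinv F' ηp ηm := by
  simp only [Kinv, mul_add, sum_add_distrib]

theorem Kinv_sum_mul {ι : Type*} (s : Finset ι) (c : ι → ℝ) (F : ι → Cfg d → Cfg d → ℝ)
    (ηp ηm : Cfg d) :
    Kinv (fun ξp ξm => ∑ i ∈ s, c i * F i ξp ξm) ηp ηm = ∑ i ∈ s, c i * Kinv (F i) ηp ηm := by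
  simp only [Kinv, mul_sum, mul_left_comm (c _)]
  exact (sum_congr rfl fun _ _ => sum_comm).trans sum_comm

theorem Kinv_convolution (F : Cfg d → Cfg d → Cfg d → Cfg d → ℝ) (ηp ηm : Cfg d) :
    Kinv (fun σp σm => ∑ ξp ∈ σp.powerset, ∑ ξm ∈ σm.powerset, F ξp ξm (σp \ ξp) (σm \ ξm))
        ηp ηm =
      ∑ ξp ∈ ηp.powerset, ∑ ξm ∈ ηm.powerset, Kinv (F ξp ξm) (ηp \ ξp) (ηm \ ξm) := by
  simp only [Kinv]
  rw [← sum_powerset_sum_powerset_sdiff₂]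
  refine sum_congr rfl fun σp _ => sum_congr rfl fun σm _ => ?_
  simp only [mul_sum]
  refine sum_congr rfl fun ξp hξp => sum_congr rfl fun ξm hξm => ?_
  rw [sdiff_sdiff_sdiff_cancel_right (mem_powerset.mp hξp),
    sdiff_sdiff_sdiff_cancel_right (mem_powerset.mp hξm)]

theorem kerK_eq_Kinv (r : (Fin d → ℝ) → Cfg d → Cfg d → ℝ) (x : Fin d → ℝ) (ξp ξm : Cfg d) :
    kerK r x ξp ξm = Kinv (fun ζp ζm => r x (ζp ∪ ξp) (ζm ∪ ξm)) :=
  rfl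

def flipKernel (ap am : (Fin d → ℝ) → Cfg d → Cfg d → ℝ) (G : Cfg d → Cfg d → ℝ)
    (ξp ξm ζp ζm : Cfg d) : ℝ :=
  (∑ x ∈ ξp, (G (ξp.erase x) (insert x ξm) - G ξp ξm) * ap x (ζp ∪ ξp.erase x) (ζm ∪ ξm))
  + ∑ y ∈ ξm, (G (insert y ξp) (ξm.erase y) - G ξp ξm) * am y (ζp ∪ ξp) (ζm ∪ ξm.erase y)

theorem sum_mul_Ktr_erase_insert_sub (a : (Fin d → ℝ) → Cfg d → Cfg d → ℝ)
    (G : Cfg d → Cfg d → ℝ) {σp σm : Cfg d} (h : Disjoint σp σm) :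
    ∑ x ∈ σp, a x (σp.erase x) σm * (Ktr G (σp.erase x) (insert x σm) - Ktr G σp σm) =
      ∑ ξp ∈ σp.powerset, ∑ ξm ∈ σm.powerset, ∑ x ∈ ξp,
        (G (ξp.erase x) (insert x ξm) - G ξp ξm) *
          a x ((σp \ ξp) ∪ ξp.erase x) ((σm \ ξm) ∪ ξm) := by
  calc _ = ∑ x ∈ σp, ∑ ξp ∈ (σp.erase x).powerset, ∑ ξm ∈ σm.powerset,
        (G ξp (insert x ξm) - G (insert x ξp) ξm) * a x (σp.erase x) σm := by
        refine sum_congr rfl fun x hx => ?_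
        rw [Ktr_erase_insert_sub G hx (disjoint_left.mp h hx), mul_comm, sum_mul]
        simp only [sum_mul]
    _ = ∑ ξp ∈ σp.powerset, ∑ x ∈ ξp, ∑ ξm ∈ σm.powerset,
        (G (ξp.erase x) (insert x ξm) - G ξp ξm) * a x (σp.erase x) σm := by
        rw [sum_powerset_sum_mem]
        refine sum_congr rfl fun x _ => sum_congr rfl fun ξp hξp => ?_
        rw [erase_insert fun hxξ => (mem_erase.mp (mem_powerset.mp hξp hxξ)).1 rfl]
    _ = _ := by
        refine sum_congr rfl fun ξp hξp => ?_
        rw [sum_comm]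
        refine sum_congr rfl fun ξm hξm => sum_congr rfl fun x hx => ?_
        rw [sdiff_union_erase_cancel (mem_powerset.mp hξp) hx,
          sdiff_union_of_subset (mem_powerset.mp hξm)]

theorem Lflip_Ktr (ap am : (Fin d → ℝ) → Cfg d → Cfg d → ℝ) (G : Cfg d → Cfg d → ℝ)
    {σp σm : Cfg d} (h : Disjoint σp σm) :
    Lflip ap am (Ktr G) σp σm =
      ∑ ξp ∈ σp.powerset, ∑ ξm ∈ σm.powerset, flipKernel ap am G ξp ξm (σp \ ξp) (σm \ ξm) := by
  -- the `−` half is the `+` half with the two components exchanged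
  have hm := sum_mul_Ktr_erase_insert_sub (fun y ξm ξp => am y ξp ξm) (fun ξm ξp => G ξp ξm) h.symm
  simp only [Ktr_swap] at hm
  rw [Lflip, sum_mul_Ktr_erase_insert_sub ap G h, hm, sum_comm (s := σm.powerset)]
  simp only [flipKernel, sum_add_distrib]

end KTransform

/-- explicit form of the hierarchical operator `L̂₀ = 𝕂⁻¹ L₀ 𝕂` for
two-component flipping dynamics. -/
theorem hatL_flip {d : ℕ} (ap am : (Fin d → ℝ) → Cfg d → Cfg d → ℝ)
    (G : Cfg d → Cfg d → ℝ) (ηp ηm : Cfg d) (hdisj : Disjoint ηp ηm) :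
    Kinv (Lflip ap am (Ktr G)) ηp ηm =
      (∑ ξp ∈ ηp.powerset, ∑ ξm ∈ ηm.powerset, ∑ x ∈ ξp,
        (G (ξp.erase x) (insert x ξm) - G ξp ξm) *
          kerK ap x (ξp.erase x) ξm (ηp \ ξp) (ηm \ ξm))
      + (∑ ξp ∈ ηp.powerset, ∑ ξm ∈ ηm.powerset, ∑ y ∈ ξm,
        (G (insert y ξp) (ξm.erase y) - G ξp ξm) *
          kerK am y ξp (ξm.erase y) (ηp \ ξp) (ηm \ ξm)) := by
  rw [Kinv_congr fun σp hp σm hm => Lflip_Ktr ap am G (hdisj.mono hp hm), Kinv_convolution]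
  unfold flipKernel
  simp only [Kinv_add, Kinv_sum_mul, ← kerK_eq_Kinv, sum_add_distrib]
end
end
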